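/- With the notation below, 1/γ ≤ (1/2)·Σ_{i≠j} 1/φ(i,j) + max_{1≤i≤m} (1/γ_i)·(1 + Σ_{j≠i} κ_i/φ(i,j)); equivalently, 1/γ ≤ ((1/2)·Σ_{i≠j} 1/φ(i,j))·(1 + [max_i (1/γ_i)·(1 + Σ_{j≠i} κ_i/φ(i,j))]/((1/2)·Σ_{i≠j} 1/φ(i,j))). -/

import Mathlib

open Finset

noncomputable section

/-- Irreducibility of a finite nonnegative matrix: any state reaches any other. -/
def Irred {n : Type*} [Fintype n] [DecidableEq n] (P : Matrix n n ℝ) : Prop :=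
  ∀ x y, ∃ k : ℕ, 0 < (P ^ k) x y

/-- The restricted ensemble `μ_R(x) = μ(x)/μ(R)` (as a function on all of `X`). -/
def muR {X : Type*} [Fintype X] (μ : X → ℝ) (R : Finset X) (x : X) : ℝ :=
  μ x / ∑ y ∈ R, μ y

/-- Escape probability `e_R(x) = Σ_{y∉R} p(x,y)`. -/
def escR {X : Type*} [Fintype X] [DecidableEq X] (p : Matrix X X ℝ) (R : Finset X)
    (x : X) : ℝ := ∑ y ∈ Rᶜ, p x y

/-- The reflected kernel `p_R` on `R`. -/
def pRefl {X : Type*} [Fintype X] [DecidableEq X] (p : Matrix X X ℝ) (R : Finset X) :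
    Matrix R R ℝ :=
  fun x y => if (x : X) = (y : X) then p x x + escR p R x else p x y

/-- The sub-Markovian killed kernel `p_R^*` on `R`. -/
def pKill {X : Type*} [Fintype X] (p : Matrix X X ℝ) (R : Finset X) : Matrix R R ℝ :=
  fun x y => p x y

/-- Mean of `f` with respect to the weight `μ` on a finite type. -/
def meanOf {n : Type*} [Fintype n] (μ : n → ℝ) (f : n → ℝ) : ℝ := ∑ x, μ x * f x

/-- Scalar product `⟨f,g⟩` with respect to the weight `μ` on a finite type. -/
def innOf {n : Type*} [Fintype n] (μ : n → ℝ) (f g : n → ℝ) : ℝ := ∑ x, μ x * f x * g x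

/-- Variance of `f` with respect to the weight `μ` on a finite type. -/
def varOf {n : Type*} [Fintype n] (μ : n → ℝ) (f : n → ℝ) : ℝ :=
  ∑ x, μ x * (f x - meanOf μ f) ^ 2

/-- Dirichlet form of the kernel `P` reversible w.r.t. `μ`. -/
def dirOf {n : Type*} [Fintype n] (P : Matrix n n ℝ) (μ : n → ℝ) (f : n → ℝ) : ℝ :=
  (1 / 2) * ∑ x, ∑ y, μ x * P x y * (f x - f y) ^ 2

/-- Spectral gap of the kernel `P` reversible w.r.t. `μ`:
`min { D(f)/Var_μ(f) : Var_μ(f) ≠ 0 }`. -/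
def gapOf {n : Type*} [Fintype n] (P : Matrix n n ℝ) (μ : n → ℝ) : ℝ :=
  sInf {r : ℝ | ∃ f : n → ℝ, varOf μ f ≠ 0 ∧ r = dirOf P μ f / varOf μ f}

/-- Spectral gap `γ_R` of the reflected process on `R`. -/
def gapR {X : Type*} [Fintype X] [DecidableEq X] (p : Matrix X X ℝ) (μ : X → ℝ)
    (R : Finset X) : ℝ :=
  gapOf (pRefl p R) (fun x : R => muR μ R x)

/-- `(κ,∞)`-capacity `C_κ(R, X∖R)` (Dirichlet principle). -/
def capK {X : Type*} [Fintype X] [DecidableEq X] (p : Matrix X X ℝ) (μ : X → ℝ)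
    (R : Finset X) (κ : ℝ) : ℝ :=
  sInf {r : ℝ | ∃ f : X → ℝ, (∀ x ∉ R, f x = 0) ∧
    r = dirOf p μ f + κ * ∑ a ∈ R, μ a * (f a - 1) ^ 2}

/-- `(∞,λ)`-capacity `C^λ(R, X∖R)` (Dirichlet principle). -/
def capL {X : Type*} [Fintype X] [DecidableEq X] (p : Matrix X X ℝ) (μ : X → ℝ)
    (R : Finset X) (l : ℝ) : ℝ :=
  sInf {r : ℝ | ∃ f : X → ℝ, (∀ x ∈ R, f x = 1) ∧
    r = dirOf p μ f + l * ∑ b ∈ Rᶜ, μ b * f b ^ 2}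

/-- `(κ,λ)`-capacity `C_κ^λ(A, B)` (Dirichlet principle). -/
def capKL {X : Type*} [Fintype X] [DecidableEq X] (p : Matrix X X ℝ) (μ : X → ℝ)
    (A B : Finset X) (κ l : ℝ) : ℝ :=
  sInf {r : ℝ | ∃ f : X → ℝ,
    r = dirOf p μ f + κ * ∑ a ∈ A, μ a * (f a - 1) ^ 2 + l * ∑ b ∈ B, μ b * f b ^ 2}

/-!
Write `w_i = μ(R_i)`, `E_i` for the `μ_{R_i}`-mean of `f` and `V_i = w_i Var_{μ_{R_i}}(f)`.
The variance of `f` splits as `Σ_i V_i + (1/2) Σ_{i,j} w_i w_j (E_i - E_j)²`. Since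
`(f - E_j)/(E_i - E_j)` is a test function for `C_{κ_i}^{κ_j}(R_i, R_j)`, each between-block term
is at most `φ(i,j)⁻¹ (D(f) + κ_i V_i + κ_j V_j)`. After summing, every `V_i` carries the
weight `1 + Σ_{j≠i} κ_i/φ(i,j)` and is bounded by the local Poincaré inequality
`V_i ≤ γ_i⁻¹ w_i D_{R_i}(f)`; the restricted Dirichlet forms `w_i D_{R_i}(f)` add up to at
most `D(f)`. Hence `Var(f) ≤ (S + M) D(f)` for the two terms `S`, `M` of the bound, that is
`1/γ ≤ S + M`.
-/

section WeightedForms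

variable {n : Type*} [Fintype n] (P : Matrix n n ℝ) (ν : n → ℝ)

theorem sum_mul_sq_nonneg {α : Type*} {w : α → ℝ} (hw : ∀ x, 0 ≤ w x) (s : Finset α)
    (g : α → ℝ) : 0 ≤ ∑ x ∈ s, w x * g x ^ 2 :=
  sum_nonneg fun x _ => mul_nonneg (hw x) (sq_nonneg _)

theorem dirOf_nonneg (hP : ∀ x y, 0 ≤ P x y) (hν : ∀ x, 0 ≤ ν x) (f : n → ℝ) :
    0 ≤ dirOf P ν f :=
  mul_nonneg (by norm_num) <| sum_nonneg fun x _ => sum_nonneg fun y _ =>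
    mul_nonneg (mul_nonneg (hν x) (hP x y)) (sq_nonneg _)

theorem varOf_nonneg (hν : ∀ x, 0 ≤ ν x) (f : n → ℝ) : 0 ≤ varOf ν f :=
  sum_mul_sq_nonneg hν _ _

theorem varOf_eq_half_sum_sum (hν : ∑ x, ν x = 1) (f : n → ℝ) :
    varOf ν f = (1 / 2) * ∑ x, ∑ y, ν x * ν y * (f x - f y) ^ 2 := by
  set m := meanOf ν f
  have hcentered : ∑ x, ν x * (f x - m) = 0 := by
    simp only [mul_sub, sum_sub_distrib, ← sum_mul, hν, one_mul, m, meanOf, sub_self]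
  have hsplit : ∀ x y, ν x * ν y * (f x - f y) ^ 2 = ν x * (f x - m) ^ 2 * ν y
      + ν y * (f y - m) ^ 2 * ν x - 2 * (ν x * (f x - m)) * (ν y * (f y - m)) := by
    intro x y; ring
  simp only [hsplit, sum_sub_distrib, sum_add_distrib, ← mul_sum, ← sum_mul, hν, hcentered]
  simp only [varOf, m]
  ring

theorem dirOf_sub_const_mul (f : n → ℝ) (c t : ℝ) :
    dirOf P ν (fun x => (f x - c) * t) = t ^ 2 * dirOf P ν f := by
  simp only [dirOf, mul_sum]
  exact sum_congr rfl fun x _ => sum_congr rfl fun y _ => by ring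

theorem dirOf_const_sub (f : n → ℝ) (c : ℝ) :
    dirOf P ν (fun x => c - f x) = dirOf P ν f := by
  simp only [dirOf]
  congr 1
  exact sum_congr rfl fun x _ => sum_congr rfl fun y _ => by ring

theorem gapOf_nonneg (hP : ∀ x y, 0 ≤ P x y) (hν : ∀ x, 0 ≤ ν x) : 0 ≤ gapOf P ν :=
  Real.sInf_nonneg <| by
    rintro _ ⟨f, -, rfl⟩
    exact div_nonneg (dirOf_nonneg P ν hP hν f) (varOf_nonneg ν hν f)

theorem gapOf_le (hP : ∀ x y, 0 ≤ P x y) (hν : ∀ x, 0 ≤ ν x) {f : n → ℝ}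
    (hf : varOf ν f ≠ 0) : gapOf P ν ≤ dirOf P ν f / varOf ν f := by
  refine csInf_le ⟨0, ?_⟩ ⟨f, hf, rfl⟩
  rintro _ ⟨g, -, rfl⟩
  exact div_nonneg (dirOf_nonneg P ν hP hν g) (varOf_nonneg ν hν g)

theorem one_div_le_gapOf (hν : ∀ x, 0 ≤ ν x) {K : ℝ} (hK : 0 < K)
    (h : ∀ f, varOf ν f ≤ K * dirOf P ν f) {f₀ : n → ℝ} (hf₀ : varOf ν f₀ ≠ 0) :
    1 / K ≤ gapOf P ν := by
  refine le_csInf ⟨_, f₀, hf₀, rfl⟩ ?_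
  rintro _ ⟨f, hf, rfl⟩
  rw [div_le_div_iff₀ hK ((varOf_nonneg ν hν f).lt_of_ne' hf)]
  linarith [h f]

theorem one_div_gapOf_le (hν : ∀ x, 0 ≤ ν x) {K : ℝ} (hK : 0 ≤ K)
    (h : ∀ f, varOf ν f ≤ K * dirOf P ν f) : 1 / gapOf P ν ≤ K := by
  by_cases hne : ∃ f₀, varOf ν f₀ ≠ 0
  · obtain ⟨f₀, hf₀⟩ := hne
    have hKpos : 0 < K := by
      refine hK.lt_of_ne ?_
      rintro rfl
      exact hf₀ (le_antisymm (by simpa using h f₀) (varOf_nonneg ν hν f₀))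
    simpa using one_div_le_one_div_of_le (one_div_pos.2 hKpos)
      (one_div_le_gapOf P ν hν hKpos h hf₀)
  · push Not at hne
    simp [gapOf, hne, hK]

theorem sq_sub_le_mul_dirOf (hP : ∀ x y, 0 ≤ P x y) (hν : ∀ x, 0 ≤ ν x) {x y : n}
    (hxy : 0 < ν x * P x y) (f : n → ℝ) :
    (f x - f y) ^ 2 ≤ 2 / (ν x * P x y) * dirOf P ν f := by
  have hterm : ∀ x' y', 0 ≤ ν x' * P x' y' * (f x' - f y') ^ 2 := fun x' y' =>
    mul_nonneg (mul_nonneg (hν x') (hP x' y')) (sq_nonneg _)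
  have hle :
      ν x * P x y * (f x - f y) ^ 2 ≤ ∑ x', ∑ y', ν x' * P x' y' * (f x' - f y') ^ 2 :=
    (single_le_sum (fun y' _ => hterm x y') (mem_univ y)).trans
      (single_le_sum (f := fun x' => ∑ y', ν x' * P x' y' * (f x' - f y') ^ 2)
        (fun x' _ => sum_nonneg fun y' _ => hterm x' y') (mem_univ x))
  rw [div_mul_eq_mul_div, le_div_iff₀ hxy, dirOf]
  linarith

section Irreducible

variable [DecidableEq n]

theorem exists_sq_sub_le_mul_dirOf_of_pow_pos (hP : ∀ x y, 0 ≤ P x y) (hν : ∀ x, 0 < ν x)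
    (k : ℕ) : ∀ x y, 0 < (P ^ k) x y →
      ∃ C > 0, ∀ f : n → ℝ, (f x - f y) ^ 2 ≤ C * dirOf P ν f := by
  have hν0 : ∀ x, 0 ≤ ν x := fun x => (hν x).le
  induction k with
  | zero =>
    intro x y h
    obtain rfl : x = y := by
      by_contra hxy
      simp [Matrix.one_apply_ne hxy] at h
    exact ⟨1, one_pos, fun f => by simpa using dirOf_nonneg P ν hP hν0 f⟩
  | succ k ih =>
    intro x y h
    rw [pow_succ, Matrix.mul_apply] at h
    obtain ⟨z, -, hz⟩ := (sum_pos_iff_of_nonneg fun z _ =>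
      mul_nonneg (Matrix.pow_apply_nonneg hP k x z) (hP z y)).1 h
    obtain ⟨C, hC, hCf⟩ := ih x z (pos_of_mul_pos_left hz (hP z y))
    have hzy : 0 < ν z * P z y :=
      mul_pos (hν z) (pos_of_mul_pos_right hz (Matrix.pow_apply_nonneg hP k x z))
    refine ⟨2 * C + 2 * (2 / (ν z * P z y)), by positivity, fun f => ?_⟩
    have hxz := hCf f
    have hzy' := sq_sub_le_mul_dirOf P ν hP hν0 hzy f
    nlinarith [sq_nonneg (f x - 2 * f z + f y)]

theorem exists_varOf_le_mul_dirOf (hP : ∀ x y, 0 ≤ P x y) (hν : ∀ x, 0 < ν x)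
    (hν1 : ∑ x, ν x = 1) (hirr : Irred P) :
    ∃ K > 0, ∀ f, varOf ν f ≤ K * dirOf P ν f := by
  have hpair : ∀ x y, ∃ C > 0, ∀ f : n → ℝ, (f x - f y) ^ 2 ≤ C * dirOf P ν f :=
    fun x y =>
    let ⟨k, hk⟩ := hirr x y
    exists_sq_sub_le_mul_dirOf_of_pow_pos P ν hP hν k x y hk
  choose C hC hCf using hpair
  have hweight : ∀ x y, 0 ≤ ν x * ν y := fun x y => mul_nonneg (hν x).le (hν y).le
  set K₀ := (1 / 2) * ∑ x, ∑ y, ν x * ν y * C x y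
  have hK₀ : 0 ≤ K₀ := mul_nonneg (by norm_num) <| sum_nonneg fun x _ =>
    sum_nonneg fun y _ => mul_nonneg (hweight x y) (hC x y).le
  refine ⟨K₀ + 1, by linarith, fun f => ?_⟩
  have hD := dirOf_nonneg P ν hP (fun x => (hν x).le) f
  calc varOf ν f = (1 / 2) * ∑ x, ∑ y, ν x * ν y * (f x - f y) ^ 2 :=
        varOf_eq_half_sum_sum ν hν1 f
    _ ≤ (1 / 2) * ∑ x, ∑ y, ν x * ν y * (C x y * dirOf P ν f) := by
        gcongr with x _ y _
        exacts [hweight x y, hCf x y f]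
    _ = K₀ * dirOf P ν f := by simp only [K₀, sum_mul, mul_assoc]
    _ ≤ (K₀ + 1) * dirOf P ν f := by nlinarith

theorem varOf_le_one_div_gapOf_mul_dirOf (hP : ∀ x y, 0 ≤ P x y) (hν : ∀ x, 0 < ν x)
    (hν1 : ∑ x, ν x = 1) (hirr : Irred P) (f : n → ℝ) :
    varOf ν f ≤ 1 / gapOf P ν * dirOf P ν f := by
  have hν0 : ∀ x, 0 ≤ ν x := fun x => (hν x).le
  by_cases hf : varOf ν f = 0
  · rw [hf]
    exact mul_nonneg (one_div_nonneg.2 (gapOf_nonneg P ν hP hν0)) (dirOf_nonneg P ν hP hν0 f)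
  obtain ⟨K, hK, hKf⟩ := exists_varOf_le_mul_dirOf P ν hP hν hν1 hirr
  have hgap : 0 < gapOf P ν :=
    (one_div_pos.2 hK).trans_le (one_div_le_gapOf P ν hν0 hK hKf hf)
  have hle := gapOf_le P ν hP hν0 hf
  rw [le_div_iff₀ ((varOf_nonneg ν hν0 f).lt_of_ne' hf)] at hle
  rw [one_div_mul_eq_div, le_div_iff₀ hgap]
  linarith

end Irreducible

end WeightedForms

section Capacity

variable {X : Type*} [Fintype X] [DecidableEq X] (p : Matrix X X ℝ) (μ : X → ℝ)
  (A B : Finset X) {κ l : ℝ}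

theorem capKL_le (hp : ∀ x y, 0 ≤ p x y) (hμ : ∀ x, 0 ≤ μ x) (hκ : 0 ≤ κ)
    (hl : 0 ≤ l) (f : X → ℝ) :
    capKL p μ A B κ l ≤
      dirOf p μ f + κ * ∑ a ∈ A, μ a * (f a - 1) ^ 2 + l * ∑ b ∈ B, μ b * f b ^ 2 := by
  refine csInf_le ⟨0, ?_⟩ ⟨f, rfl⟩
  rintro _ ⟨g, rfl⟩
  exact add_nonneg (add_nonneg (dirOf_nonneg p μ hp hμ g)
    (mul_nonneg hκ (sum_mul_sq_nonneg hμ _ _))) (mul_nonneg hl (sum_mul_sq_nonneg hμ _ _))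

theorem capKL_comm (κ l : ℝ) : capKL p μ A B κ l = capKL p μ B A l κ := by
  simp only [capKL]
  congr 1
  ext r
  constructor <;> rintro ⟨f, rfl⟩ <;> refine ⟨fun x => 1 - f x, ?_⟩ <;>
    simp only [dirOf_const_sub, sub_sub_cancel_left, neg_sq, sub_sq_comm (1 : ℝ)] <;> ring

theorem capKL_pos (hp : ∀ x y, 0 ≤ p x y) (hμ : ∀ x, 0 < μ x) (hκ : 0 < κ) (hl : 0 < l)
    (hirr : Irred p) {a b : X} (ha : a ∈ A) (hb : b ∈ B) : 0 < capKL p μ A B κ l := by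
  have hμ0 : ∀ x, 0 ≤ μ x := fun x => (hμ x).le
  obtain ⟨k, hk⟩ := hirr a b
  obtain ⟨C, hC, hCf⟩ := exists_sq_sub_le_mul_dirOf_of_pow_pos p μ hp hμ k a b hk
  set c := min (min (κ * μ a) (l * μ b)) C⁻¹
  have hc : 0 < c := lt_min (lt_min (mul_pos hκ (hμ a)) (mul_pos hl (hμ b))) (inv_pos.2 hC)
  refine (div_pos hc three_pos).trans_le (le_csInf ⟨_, 0, rfl⟩ ?_)
  rintro _ ⟨f, rfl⟩
  have hA : c * (f a - 1) ^ 2 ≤ κ * ∑ x ∈ A, μ x * (f x - 1) ^ 2 := calc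
    c * (f a - 1) ^ 2 ≤ κ * μ a * (f a - 1) ^ 2 := by
      gcongr; exact (min_le_left _ _).trans (min_le_left _ _)
    _ ≤ κ * ∑ x ∈ A, μ x * (f x - 1) ^ 2 := by
      rw [mul_assoc]; gcongr
      exact single_le_sum (f := fun x => μ x * (f x - 1) ^ 2)
        (fun x _ => mul_nonneg (hμ0 x) (sq_nonneg _)) ha
  have hB : c * f b ^ 2 ≤ l * ∑ x ∈ B, μ x * f x ^ 2 := calc
    c * f b ^ 2 ≤ l * μ b * f b ^ 2 := by
      gcongr; exact (min_le_left _ _).trans (min_le_right _ _)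
    _ ≤ l * ∑ x ∈ B, μ x * f x ^ 2 := by
      rw [mul_assoc]; gcongr
      exact single_le_sum (f := fun x => μ x * f x ^ 2)
        (fun x _ => mul_nonneg (hμ0 x) (sq_nonneg _)) hb
  have hD : c * (f a - f b) ^ 2 ≤ dirOf p μ f := calc
    c * (f a - f b) ^ 2 ≤ C⁻¹ * (C * dirOf p μ f) := by
      gcongr; exacts [min_le_right _ _, hCf f]
    _ = dirOf p μ f := by field_simp
  -- the three differences `1 - f a`, `f a - f b`, `f b` add up to `1`
  have hsplit : 1 ≤ 3 * ((f a - 1) ^ 2 + (f a - f b) ^ 2 + f b ^ 2) := by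
    nlinarith [sq_nonneg (f a - 1 - (f a - f b)), sq_nonneg (f a - f b - f b),
      sq_nonneg (f a - 1 + f b)]
  nlinarith

theorem capKL_mul_sq_sub_le (hp : ∀ x y, 0 ≤ p x y) (hμ : ∀ x, 0 ≤ μ x) (hκ : 0 ≤ κ)
    (hl : 0 ≤ l) (f : X → ℝ) (s t : ℝ) :
    capKL p μ A B κ l * (s - t) ^ 2 ≤
      dirOf p μ f + κ * ∑ a ∈ A, μ a * (f a - s) ^ 2
        + l * ∑ b ∈ B, μ b * (f b - t) ^ 2 := by
  rcases eq_or_ne s t with rfl | hst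
  · rw [sub_self, zero_pow two_ne_zero, mul_zero]
    exact add_nonneg (add_nonneg (dirOf_nonneg p μ hp hμ f)
      (mul_nonneg hκ (sum_mul_sq_nonneg hμ _ _))) (mul_nonneg hl (sum_mul_sq_nonneg hμ _ _))
  have hst' : s - t ≠ 0 := sub_ne_zero.2 hst
  -- test `(f - t) / (s - t)`, which is `1` where `f = s` and `0` where `f = t`
  have h := capKL_le p μ A B hp hμ hκ hl (fun x => (f x - t) * (s - t)⁻¹)
  have hA : ∑ a ∈ A, μ a * ((f a - t) * (s - t)⁻¹ - 1) ^ 2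
      = ((s - t)⁻¹) ^ 2 * ∑ a ∈ A, μ a * (f a - s) ^ 2 := by
    rw [mul_sum]; exact sum_congr rfl fun a _ => by field_simp; ring
  have hB : ∑ b ∈ B, μ b * ((f b - t) * (s - t)⁻¹) ^ 2
      = ((s - t)⁻¹) ^ 2 * ∑ b ∈ B, μ b * (f b - t) ^ 2 := by
    rw [mul_sum]; exact sum_congr rfl fun b _ => by ring
  rw [dirOf_sub_const_mul, hA, hB] at h
  calc capKL p μ A B κ l * (s - t) ^ 2
      ≤ (s - t)⁻¹ ^ 2 * (dirOf p μ f + κ * ∑ a ∈ A, μ a * (f a - s) ^ 2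
          + l * ∑ b ∈ B, μ b * (f b - t) ^ 2) * (s - t) ^ 2 := by
        gcongr; linarith
    _ = _ := by field_simp

end Capacity

section Block

variable {X : Type*} (p : Matrix X X ℝ) (μ : X → ℝ) (R : Finset X)

def blockMean (f : X → ℝ) : ℝ := (∑ x ∈ R, μ x * f x) / ∑ x ∈ R, μ x

/-- `μ(R) · Var_{μ_R}(f)`. -/
def blockVar (f : X → ℝ) : ℝ := ∑ x ∈ R, μ x * (f x - blockMean μ R f) ^ 2

/-- `μ(R) · D_R(f)`: the reflected kernel moves mass only inside `R`, and its holding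
probabilities do not contribute. -/
def blockDir (f : X → ℝ) : ℝ :=
  (1 / 2) * ∑ x ∈ R, ∑ y ∈ R, μ x * p x y * (f x - f y) ^ 2

theorem sum_mul_sq_sub_eq_blockVar_add (hR : ∑ x ∈ R, μ x ≠ 0) (f : X → ℝ) (c : ℝ) :
    ∑ x ∈ R, μ x * (f x - c) ^ 2
      = blockVar μ R f + (∑ x ∈ R, μ x) * (blockMean μ R f - c) ^ 2 := by
  set E := blockMean μ R f
  have hcentered : ∑ x ∈ R, μ x * (f x - E) = 0 := by
    simp only [mul_sub, sum_sub_distrib, ← sum_mul, E, blockMean, mul_div_cancel₀ _ hR,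
      sub_self]
  have hsplit : ∀ x, μ x * (f x - c) ^ 2
      = μ x * (f x - E) ^ 2 + 2 * (E - c) * (μ x * (f x - E)) + (E - c) ^ 2 * μ x := by
    intro x; ring
  simp only [hsplit, sum_add_distrib, ← mul_sum, hcentered, blockVar, E]
  ring

theorem blockDir_nonneg (hp : ∀ x y, 0 ≤ p x y) (hμ : ∀ x, 0 ≤ μ x) (f : X → ℝ) :
    0 ≤ blockDir p μ R f :=
  mul_nonneg (by norm_num) <| sum_nonneg fun x _ => sum_nonneg fun y _ =>
    mul_nonneg (mul_nonneg (hμ x) (hp x y)) (sq_nonneg _)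

variable [Fintype X]

theorem sum_muR (hR : ∑ x ∈ R, μ x ≠ 0) : ∑ x : R, muR μ R x = 1 := by
  rw [sum_coe_sort R (muR μ R)]
  simp only [muR]
  rw [← sum_div, div_self hR]

theorem meanOf_muR (f : X → ℝ) :
    meanOf (fun x : R => muR μ R x) (fun x : R => f x) = blockMean μ R f := by
  simp only [meanOf, muR, blockMean, div_mul_eq_mul_div, sum_div]
  exact sum_coe_sort R (fun x => μ x * f x / ∑ y ∈ R, μ y)

theorem mul_varOf_muR (hR : ∑ x ∈ R, μ x ≠ 0) (f : X → ℝ) :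
    (∑ x ∈ R, μ x) * varOf (fun x : R => muR μ R x) (fun x : R => f x) = blockVar μ R f := by
  rw [varOf, meanOf_muR, mul_sum, blockVar,
    ← sum_coe_sort R (fun x => μ x * (f x - blockMean μ R f) ^ 2)]
  refine sum_congr rfl fun x _ => ?_
  simp only [muR]
  field_simp

variable [DecidableEq X]

theorem pRefl_nonneg (hp : ∀ x y, 0 ≤ p x y) (x y : R) : 0 ≤ pRefl p R x y := by
  unfold pRefl escR
  split_ifs
  · exact add_nonneg (hp x x) (sum_nonneg fun z _ => hp x z)
  · exact hp x y

theorem mul_dirOf_pRefl (hR : ∑ x ∈ R, μ x ≠ 0) (f : X → ℝ) :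
    (∑ x ∈ R, μ x) * dirOf (pRefl p R) (fun x : R => muR μ R x) (fun x : R => f x)
      = blockDir p μ R f := by
  have hterm : ∀ x y : R, (∑ z ∈ R, μ z) * (muR μ R x * pRefl p R x y * (f x - f y) ^ 2)
      = μ x * p x y * (f x - f y) ^ 2 := by
    intro x y
    by_cases hxy : (x : X) = y
    · simp [hxy]
    · simp only [pRefl, if_neg hxy, muR]; field_simp
  rw [dirOf, blockDir, mul_left_comm, mul_sum,
    ← sum_coe_sort R (fun x => ∑ y ∈ R, μ x * p x y * (f x - f y) ^ 2)]
  congr 1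
  refine sum_congr rfl fun x _ => ?_
  rw [mul_sum, ← sum_coe_sort R (fun y => μ x * p x y * (f x - f y) ^ 2)]
  exact sum_congr rfl fun y _ => hterm x y

theorem blockVar_le_one_div_gapR_mul_blockDir (hp : ∀ x y, 0 ≤ p x y) (hμ : ∀ x, 0 < μ x)
    (hR : R.Nonempty) (hirr : Irred (pRefl p R)) (f : X → ℝ) :
    blockVar μ R f ≤ 1 / gapR p μ R * blockDir p μ R f := by
  have hw : 0 < ∑ x ∈ R, μ x := sum_pos (fun x _ => hμ x) hR
  rw [← mul_varOf_muR μ R hw.ne', ← mul_dirOf_pRefl p μ R hw.ne', mul_left_comm]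
  exact mul_le_mul_of_nonneg_left (varOf_le_one_div_gapOf_mul_dirOf _ _ (pRefl_nonneg p R hp)
    (fun x => div_pos (hμ x) hw) (sum_muR μ R hw.ne') hirr _) hw.le

end Block

theorem sum_sum_erase_mul_add_add {ι : Type*} [Fintype ι] [DecidableEq ι] (a : ι → ι → ℝ)
    (ha : ∀ i j, a i j = a j i) (D : ℝ) (u : ι → ℝ) :
    ∑ i, ∑ j ∈ univ.erase i, a i j * (D + u i + u j)
      = (∑ i, ∑ j ∈ univ.erase i, a i j) * D
        + 2 * ∑ i, ∑ j ∈ univ.erase i, a i j * u i := by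
  have hswap :
      ∑ i, ∑ j ∈ univ.erase i, a i j * u j = ∑ i, ∑ j ∈ univ.erase i, a i j * u i := by
    rw [sum_comm' (t' := univ) (s' := fun j => univ.erase j) fun i j => by simp [ne_comm]]
    exact sum_congr rfl fun i _ => sum_congr rfl fun j _ => by rw [ha]
  simp only [mul_add, sum_add_distrib, hswap, sum_mul]
  ring

section Partition

variable {X ι : Type*} [Fintype X] [DecidableEq X] (p : Matrix X X ℝ) (μ : X → ℝ)
  (Rv : ι → Finset X)

/-- The paper's `φ(i, j)`. -/
def capRatio (κv : ι → ℝ) (i j : ι) : ℝ :=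
  capKL p μ (Rv i) (Rv j) (κv i) (κv j) / ((∑ y ∈ Rv i, μ y) * ∑ y ∈ Rv j, μ y)

theorem capRatio_comm (κv : ι → ℝ) (i j : ι) :
    capRatio p μ Rv κv i j = capRatio p μ Rv κv j i := by
  rw [capRatio, capRatio, capKL_comm, mul_comm]

theorem capRatio_pos (hp : ∀ x y, 0 ≤ p x y) (hμ : ∀ x, 0 < μ x) (hirr : Irred p)
    (hne : ∀ i, (Rv i).Nonempty) {κv : ι → ℝ} (hκv : ∀ i, 0 < κv i) (i j : ι) :
    0 < capRatio p μ Rv κv i j :=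
  div_pos (capKL_pos p μ _ _ hp hμ (hκv i) (hκv j) hirr (hne i).choose_spec (hne j).choose_spec)
    (mul_pos (sum_pos (fun x _ => hμ x) (hne i)) (sum_pos (fun x _ => hμ x) (hne j)))

theorem mul_sq_blockMean_sub_le (hp : ∀ x y, 0 ≤ p x y) (hμ : ∀ x, 0 < μ x) (hirr : Irred p)
    (hne : ∀ i, (Rv i).Nonempty) {κv : ι → ℝ} (hκv : ∀ i, 0 < κv i) (f : X → ℝ)
    (i j : ι) :
    (∑ x ∈ Rv i, μ x) * (∑ x ∈ Rv j, μ x) *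
        (blockMean μ (Rv i) f - blockMean μ (Rv j) f) ^ 2
      ≤ 1 / capRatio p μ Rv κv i j *
        (dirOf p μ f + κv i * blockVar μ (Rv i) f + κv j * blockVar μ (Rv j) f) := by
  have hC := capKL_pos p μ (Rv i) (Rv j) hp hμ (hκv i) (hκv j) hirr
    (hne i).choose_spec (hne j).choose_spec
  have hw : ∀ i, 0 < ∑ x ∈ Rv i, μ x := fun i => sum_pos (fun x _ => hμ x) (hne i)
  calc (∑ x ∈ Rv i, μ x) * (∑ x ∈ Rv j, μ x) *
        (blockMean μ (Rv i) f - blockMean μ (Rv j) f) ^ 2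
      = 1 / capRatio p μ Rv κv i j * (capKL p μ (Rv i) (Rv j) (κv i) (κv j) *
          (blockMean μ (Rv i) f - blockMean μ (Rv j) f) ^ 2) := by
        have := (hw i).ne'; have := (hw j).ne'
        rw [capRatio]; field_simp
    _ ≤ _ := by
        gcongr
        · exact (one_div_pos.2 (capRatio_pos p μ Rv hp hμ hirr hne hκv i j)).le
        · exact capKL_mul_sq_sub_le p μ _ _ hp (fun x => (hμ x).le) (hκv i).le (hκv j).le f _ _

variable [Fintype ι]

theorem sum_eq_sum_sum_of_partition {M : Type*} [AddCommMonoid M]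
    (hdisj : ∀ i j, i ≠ j → Disjoint (Rv i) (Rv j)) (hcover : ∀ x, ∃ i, x ∈ Rv i)
    (t : X → M) : ∑ x, t x = ∑ i, ∑ x ∈ Rv i, t x := by
  rw [← sum_biUnion fun i _ j _ hij => hdisj i j hij]
  exact sum_congr (by ext x; simpa using hcover x) fun _ _ => rfl

theorem varOf_eq_sum_blockVar_add (hμ1 : ∑ x, μ x = 1)
    (hdisj : ∀ i j, i ≠ j → Disjoint (Rv i) (Rv j)) (hcover : ∀ x, ∃ i, x ∈ Rv i)
    (hw : ∀ i, ∑ x ∈ Rv i, μ x ≠ 0) (f : X → ℝ) :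
    varOf μ f = ∑ i, blockVar μ (Rv i) f + (1 / 2) * ∑ i, ∑ j,
      (∑ x ∈ Rv i, μ x) * (∑ x ∈ Rv j, μ x) *
        (blockMean μ (Rv i) f - blockMean μ (Rv j) f) ^ 2 := by
  set w := fun i => ∑ x ∈ Rv i, μ x
  set E := fun i => blockMean μ (Rv i) f
  have hw1 : ∑ i, w i = 1 := by rw [← sum_eq_sum_sum_of_partition Rv hdisj hcover μ, hμ1]
  have hmean : meanOf μ f = meanOf w E := by
    rw [meanOf, sum_eq_sum_sum_of_partition Rv hdisj hcover]
    simp only [meanOf, w, E, blockMean, mul_div_cancel₀ _ (hw _)]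
  rw [← varOf_eq_half_sum_sum w hw1 E]
  simp only [varOf]
  rw [← hmean, sum_eq_sum_sum_of_partition Rv hdisj hcover, ← sum_add_distrib]
  exact sum_congr rfl fun i _ => sum_mul_sq_sub_eq_blockVar_add μ (Rv i) (hw i) f _

theorem sum_blockDir_le_dirOf (hp : ∀ x y, 0 ≤ p x y) (hμ : ∀ x, 0 ≤ μ x)
    (hdisj : ∀ i j, i ≠ j → Disjoint (Rv i) (Rv j)) (hcover : ∀ x, ∃ i, x ∈ Rv i)
    (f : X → ℝ) : ∑ i, blockDir p μ (Rv i) f ≤ dirOf p μ f := by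
  rw [dirOf, sum_eq_sum_sum_of_partition Rv hdisj hcover, mul_sum]
  refine sum_le_sum fun i _ => ?_
  rw [blockDir]
  gcongr with x _
  · exact fun y _ _ => mul_nonneg (mul_nonneg (hμ x) (hp x y)) (sq_nonneg _)
  · exact subset_univ _

variable [DecidableEq ι]

theorem varOf_le_mul_dirOf_add_sum_mul_blockVar (hp : ∀ x y, 0 ≤ p x y) (hμ : ∀ x, 0 < μ x)
    (hμ1 : ∑ x, μ x = 1) (hirr : Irred p) (hdisj : ∀ i j, i ≠ j → Disjoint (Rv i) (Rv j))
    (hcover : ∀ x, ∃ i, x ∈ Rv i) (hne : ∀ i, (Rv i).Nonempty) {κv : ι → ℝ}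
    (hκv : ∀ i, 0 < κv i) (f : X → ℝ) :
    varOf μ f ≤
      (1 / 2) * (∑ i, ∑ j ∈ univ.erase i, 1 / capRatio p μ Rv κv i j) * dirOf p μ f
        + ∑ i, (1 + ∑ j ∈ univ.erase i, κv i / capRatio p μ Rv κv i j) *
          blockVar μ (Rv i) f := by
  set w := fun i => ∑ x ∈ Rv i, μ x
  set E := fun i => blockMean μ (Rv i) f
  set V := fun i => blockVar μ (Rv i) f
  set a := fun i j => 1 / capRatio p μ Rv κv i j
  have hw : ∀ i, 0 < w i := fun i => sum_pos (fun x _ => hμ x) (hne i)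
  have hpair : ∀ i j,
      w i * w j * (E i - E j) ^ 2 ≤ a i j * (dirOf p μ f + κv i * V i + κv j * V j) :=
    mul_sq_blockMean_sub_le p μ Rv hp hμ hirr hne hκv f
  have hdiag : ∀ i, ∑ j, w i * w j * (E i - E j) ^ 2
      = ∑ j ∈ univ.erase i, w i * w j * (E i - E j) ^ 2 := fun i => by
    rw [← add_sum_erase _ _ (mem_univ i), sub_self, zero_pow two_ne_zero, mul_zero, zero_add]
  calc varOf μ f
      = ∑ i, V i + (1 / 2) * ∑ i, ∑ j ∈ univ.erase i, w i * w j * (E i - E j) ^ 2 := by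
        rw [varOf_eq_sum_blockVar_add μ Rv hμ1 hdisj hcover (fun i => (hw i).ne')]
        simp only [hdiag, w, E, V]
    _ ≤ ∑ i, V i + (1 / 2) * ∑ i, ∑ j ∈ univ.erase i,
          a i j * (dirOf p μ f + κv i * V i + κv j * V j) := by
        have hsum := sum_le_sum fun i (_ : i ∈ univ) =>
          sum_le_sum fun j (_ : j ∈ univ.erase i) => hpair i j
        linarith
    _ = _ := by
        have hκ : ∑ i, ∑ j ∈ univ.erase i, a i j * (κv i * V i)
            = ∑ i, (∑ j ∈ univ.erase i, κv i / capRatio p μ Rv κv i j) * V i :=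
          sum_congr rfl fun i _ => by
            rw [sum_mul]
            exact sum_congr rfl fun j _ => by simp only [a]; ring
        rw [sum_sum_erase_mul_add_add a (fun i j => by simp only [a, capRatio_comm]), hκ]
        simp only [add_mul, one_mul, sum_add_distrib, a, V]
        ring

theorem varOf_le_mul_dirOf_of_partition (hp : ∀ x y, 0 ≤ p x y) (hμ : ∀ x, 0 < μ x)
    (hμ1 : ∑ x, μ x = 1) (hirr : Irred p) (hdisj : ∀ i j, i ≠ j → Disjoint (Rv i) (Rv j))
    (hcover : ∀ x, ∃ i, x ∈ Rv i) (hne : ∀ i, (Rv i).Nonempty)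
    (hirr_block : ∀ i, Irred (pRefl p (Rv i))) {κv : ι → ℝ} (hκv : ∀ i, 0 < κv i)
    {M : ℝ} (hM0 : 0 ≤ M) (hM : ∀ i,
      1 / gapR p μ (Rv i) * (1 + ∑ j ∈ univ.erase i, κv i / capRatio p μ Rv κv i j) ≤ M)
    (f : X → ℝ) :
    varOf μ f ≤
      ((1 / 2) * (∑ i, ∑ j ∈ univ.erase i, 1 / capRatio p μ Rv κv i j) + M) *
        dirOf p μ f := by
  have hμ0 : ∀ x, 0 ≤ μ x := fun x => (hμ x).le
  set c := fun i => 1 + ∑ j ∈ univ.erase i, κv i / capRatio p μ Rv κv i j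
  have hc : ∀ i, 0 ≤ c i := fun i => add_nonneg zero_le_one <| sum_nonneg fun j _ =>
    div_nonneg (hκv i).le (capRatio_pos p μ Rv hp hμ hirr hne hκv i j).le
  have hblocks : ∑ i, c i * blockVar μ (Rv i) f ≤ M * dirOf p μ f := calc
    ∑ i, c i * blockVar μ (Rv i) f
        ≤ ∑ i, c i * (1 / gapR p μ (Rv i) * blockDir p μ (Rv i) f) := by
          gcongr with i
          · exact hc i
          · exact blockVar_le_one_div_gapR_mul_blockDir p μ _ hp hμ (hne i) (hirr_block i) f
    _ ≤ ∑ i, M * blockDir p μ (Rv i) f := by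
          refine sum_le_sum fun i _ => ?_
          rw [← mul_assoc, mul_comm (c i)]
          exact mul_le_mul_of_nonneg_right (hM i) (blockDir_nonneg p μ _ hp hμ0 f)
    _ = M * ∑ i, blockDir p μ (Rv i) f := (mul_sum ..).symm
    _ ≤ M * dirOf p μ f := by gcongr; exact sum_blockDir_le_dirOf p μ Rv hp hμ0 hdisj hcover f
  rw [add_mul]
  linarith [varOf_le_mul_dirOf_add_sum_mul_blockVar p μ Rv hp hμ hμ1 hirr hdisj hcover hne
    hκv f]

end Partition

theorem poincare_partition_general
    (X : Type*) [Fintype X] [DecidableEq X]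
    (p : Matrix X X ℝ) (μ : X → ℝ)
    (hp_nonneg : ∀ x y, 0 ≤ p x y)
    (hp_irr : Irred p)
    (hμ_pos : ∀ x, 0 < μ x)
    (hμ_sum : ∑ x, μ x = 1)
    (m : ℕ)
    (Rv : Fin m → Finset X)
    (h_ne : ∀ i, (Rv i).Nonempty)
    (h_disj : ∀ i j, i ≠ j → Disjoint (Rv i) (Rv j))
    (h_cover : ∀ x : X, ∃ i, x ∈ Rv i)
    (h_irr : ∀ i, Irred (pRefl p (Rv i)))
    (κv : Fin m → ℝ) (hκv : ∀ i, 0 < κv i) :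
    1 / gapOf p μ ≤
      (1 / 2) * (∑ i : Fin m, ∑ j ∈ Finset.univ.erase i,
          1 / (capKL p μ (Rv i) (Rv j) (κv i) (κv j) /
                ((∑ y ∈ Rv i, μ y) * ∑ y ∈ Rv j, μ y)))
        + sSup {r : ℝ | ∃ i : Fin m,
            r = (1 / gapR p μ (Rv i)) *
              (1 + ∑ j ∈ Finset.univ.erase i,
                κv i / (capKL p μ (Rv i) (Rv j) (κv i) (κv j) /
                          ((∑ y ∈ Rv i, μ y) * ∑ y ∈ Rv j, μ y)))} := by
  have hμ0 : ∀ x, 0 ≤ μ x := fun x => (hμ_pos x).le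
  have hφ := capRatio_pos p μ Rv hp_nonneg hμ_pos hp_irr h_ne hκv
  set c : Fin m → ℝ :=
    fun i => 1 / gapR p μ (Rv i) * (1 + ∑ j ∈ univ.erase i, κv i / capRatio p μ Rv κv i j)
  have hc : ∀ i, 0 ≤ c i := fun i =>
    mul_nonneg (one_div_nonneg.2 (gapOf_nonneg _ _ (pRefl_nonneg p _ hp_nonneg)
      fun x => div_nonneg (hμ0 x) (sum_nonneg fun y _ => hμ0 y)))
      (add_nonneg zero_le_one (sum_nonneg fun j _ => div_nonneg (hκv i).le (hφ i j).le))
  have hbdd : BddAbove {r | ∃ i, r = c i} :=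
    (Set.finite_range c).bddAbove.mono <| by rintro _ ⟨i, rfl⟩; exact ⟨i, rfl⟩
  have hM0 : 0 ≤ sSup {r | ∃ i, r = c i} :=
    Real.sSup_nonneg <| by rintro _ ⟨i, rfl⟩; exact hc i
  have hS0 : 0 ≤ (1 / 2) * ∑ i, ∑ j ∈ univ.erase i, 1 / capRatio p μ Rv κv i j :=
    mul_nonneg (by norm_num) (sum_nonneg fun i _ => sum_nonneg fun j _ =>
      (one_div_pos.2 (hφ i j)).le)
  exact one_div_gapOf_le p μ hμ0 (add_nonneg hS0 hM0)
    (varOf_le_mul_dirOf_of_partition p μ Rv hp_nonneg hμ_pos hμ_sum hp_irr h_disj h_cover h_ne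
      h_irr hκv hM0 fun i => le_csSup hbdd ⟨i, rfl⟩)

/-- Lemma 2.11: Poincaré inequality for a partition of `X` into `m` pieces. -/
theorem poincare_partition
    (X : Type*) [Fintype X] [DecidableEq X]
    (p : Matrix X X ℝ) (μ : X → ℝ)
    (hp_nonneg : ∀ x y, 0 ≤ p x y)
    (hp_row : ∀ x, ∑ y, p x y = 1)
    (hp_irr : Irred p)
    (hμ_pos : ∀ x, 0 < μ x)
    (hμ_sum : ∑ x, μ x = 1)
    (hrev : ∀ x y, μ x * p x y = μ y * p y x)
    (m : ℕ) (hm : 2 ≤ m)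
    (Rv : Fin m → Finset X)
    (h_ne : ∀ i, (Rv i).Nonempty)
    (h_two : ∀ i, 2 ≤ (Rv i).card)
    (h_disj : ∀ i j, i ≠ j → Disjoint (Rv i) (Rv j))
    (h_cover : ∀ x : X, ∃ i, x ∈ Rv i)
    (h_irr : ∀ i, Irred (pRefl p (Rv i)))
    (κv : Fin m → ℝ) (hκv : ∀ i, 0 < κv i) :
    1 / gapOf p μ ≤
      (1 / 2) * (∑ i : Fin m, ∑ j ∈ Finset.univ.erase i,
          1 / (capKL p μ (Rv i) (Rv j) (κv i) (κv j) /
                ((∑ y ∈ Rv i, μ y) * ∑ y ∈ Rv j, μ y)))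
        + sSup {r : ℝ | ∃ i : Fin m,
            r = (1 / gapR p μ (Rv i)) *
              (1 + ∑ j ∈ Finset.univ.erase i,
                κv i / (capKL p μ (Rv i) (Rv j) (κv i) (κv j) /
                          ((∑ y ∈ Rv i, μ y) * ∑ y ∈ Rv j, μ y)))} :=
  poincare_partition_general X p μ hp_nonneg hp_irr hμ_pos hμ_sum m Rv h_ne h_disj h_cover h_irr κv
    hκv
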